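/- arXiv:cs/0406020 — 4 statements merged into one kernel-verified Lean document; each statement's English description precedes it below -/
import Mathlib

section
/- If G is a partial cube with isometric dimension τ, then the lattice dimension of G equals τ − |M|, where M is any maximum matching in the semicube graph Sc(G). -/
/-!
Upper bound. If `M` matches the complement of a semicube `s` with `t`, then `s ⊊ t`. Following
these links, the semicubes fall into chains of nested sets; complementation maps chains to
chains, and a chain starts exactly at each semicube not covered by `M`. Orienting every coordinate
so that the chosen semicubes form a union of chains, one from each complementary pair, leaves
`τ - |M|` chains. Counting, for each vertex, the semicubes of a chain that contain it gives one
lattice coordinate; since the sets of a chain are nested, two vertices differ in it by exactly the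
number of semicubes of the chain separating them, so the sum over chains is the Hamming distance.

Lower bound. In an isometric embedding `g` into `ℤ^d`, every hypercube coordinate is a threshold
cut `{w | t ≤ g w j}` of one lattice axis `j` (look at an edge crossing it), and different
coordinates give different cuts. Matching each cut with the complement of the next larger cut on
the same axis gives a matching of `Sc(G)`, missing at most one cut per axis, so of size `≥ τ - d`.
-/

open Finset Relation Function

lemma natAbs_sum_of_forall_mul_nonneg {α : Type*} {s : Finset α} {f : α → ℤ}
    (h : ∀ i ∈ s, ∀ j ∈ s, 0 ≤ f i * f j) :
    (∑ i ∈ s, f i).natAbs = ∑ i ∈ s, (f i).natAbs := by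
  zify
  by_cases hs : ∀ i ∈ s, 0 ≤ f i
  · rw [abs_sum_of_nonneg hs]
    exact sum_congr rfl fun i hi => (abs_of_nonneg (hs i hi)).symm
  · push Not at hs
    obtain ⟨i, hi, hneg⟩ := hs
    have hle : ∀ j ∈ s, f j ≤ 0 := fun j hj => by nlinarith [h i hi j hj]
    rw [← abs_neg, ← sum_neg_distrib, abs_sum_of_nonneg fun j hj => neg_nonneg.2 (hle j hj)]
    exact sum_congr rfl fun j hj => (abs_of_nonpos (hle j hj)).symm

section SumOverFintype

variable {ι : Type*} [Fintype ι]

lemma exists_eq_one_of_sum_eq_one {f : ι → ℕ} (h : ∑ k, f k = 1) :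
    ∃ j, f j = 1 ∧ ∀ k ≠ j, f k = 0 := by
  classical
  obtain ⟨j, -, hj⟩ := exists_ne_zero_of_sum_ne_zero (h.symm ▸ one_ne_zero)
  rw [← add_sum_erase _ _ (mem_univ j)] at h
  have hrest : ∑ k ∈ univ.erase j, f k = 0 := by omega
  rw [sum_eq_zero_iff] at hrest
  exact ⟨j, by omega, fun k hk => hrest k (mem_erase.2 ⟨hk, mem_univ k⟩)⟩

lemma sum_lt_sum_iff_of_forall_ne {f g : ι → ℕ} {j : ι} (h : ∀ k ≠ j, f k = g k) :
    ∑ k, f k < ∑ k, g k ↔ f j < g j := by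
  classical
  have hrest : ∑ k ∈ univ.erase j, f k = ∑ k ∈ univ.erase j, g k :=
    sum_congr rfl fun k hk => h k (ne_of_mem_erase hk)
  rw [← add_sum_erase _ f (mem_univ j), ← add_sum_erase _ g (mem_univ j), hrest]
  omega

lemma hammingDist_lt_hammingDist_iff {β : Type*} [DecidableEq β] {w x y : ι → β} {i : ι}
    (hxy : ∀ k, x k ≠ y k ↔ k = i) :
    hammingDist w y < hammingDist w x ↔ w i = y i := by
  simp only [hammingDist, card_filter]
  rw [sum_lt_sum_iff_of_forall_ne (j := i) fun k hk => by rw [not_ne_iff.1 ((hxy k).not.2 hk)]]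
  have hi := (hxy i).2 rfl
  by_cases h : w i = y i
  · simp [h, Ne.symm hi]
  · simp only [h, ne_eq, not_false_eq_true, if_true, iff_false, not_lt]
    split_ifs <;> simp

lemma sum_natAbs_sub_lt_iff {w x y : ι → ℤ} {j : ι} (hxy : ∀ k ≠ j, x k = y k)
    (hj : x j + 1 = y j) :
    ∑ k, (w k - y k).natAbs < ∑ k, (w k - x k).natAbs ↔ y j ≤ w j := by
  rw [sum_lt_sum_iff_of_forall_ne fun k hk => by rw [hxy k hk]]
  omega

end SumOverFintype

lemma exists_injOn_succ_same_fiber {ι K : Type*} [Fintype ι] [Fintype K] {j : ι → K}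
    {t : ι → ℤ} (hinj : Injective fun i => (j i, t i)) :
    ∃ (D : Finset ι) (nxt : ι → ι), Set.InjOn nxt D ∧
      (∀ i ∈ D, j (nxt i) = j i ∧ t i < t (nxt i)) ∧ Fintype.card ι ≤ #D + Fintype.card K := by
  classical
  let D : Finset ι := {i | ∃ i', j i' = j i ∧ t i < t i'}
  have hnext : ∀ i ∈ D, ∃ n, (j n = j i ∧ t i < t n) ∧
      ∀ i', j i' = j i → t i < t i' → t n ≤ t i' := by
    intro i hi
    obtain ⟨i', hi'⟩ : ∃ i', j i' = j i ∧ t i < t i' := by simpa [D] using hi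
    obtain ⟨n, hn, hmin⟩ := exists_min_image {i' | j i' = j i ∧ t i < t i'} t
      ⟨i', by simpa using hi'⟩
    exact ⟨n, by simpa using hn, fun i' h1 h2 => hmin i' (by simp [h1, h2])⟩
  choose! nxt hnxt hnxt_min using hnext
  refine ⟨D, nxt, fun i hi i' hi' h => ?_, hnxt, ?_⟩
  · have hj : j i = j i' := by rw [← (hnxt i hi).1, h, (hnxt i' hi').1]
    have h1 := (hnxt i hi).2
    have h2 := (hnxt i' hi').2
    rw [h] at h1
    refine hinj (Prod.ext hj (le_antisymm (not_lt.1 fun hlt => ?_) (not_lt.1 fun hlt => ?_)))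
    · have := hnxt_min i' hi' i hj hlt
      omega
    · have := h ▸ hnxt_min i hi i' hj.symm hlt
      omega
  · have hmax : ∀ {i}, i ∉ D → ∀ i', j i' = j i → t i' ≤ t i := fun hi i' hj =>
      not_lt.1 fun h => hi (by simpa [D] using ⟨i', hj, h⟩)
    have hcompl : #{i | i ∉ D} ≤ Fintype.card K := by
      refine card_le_card_of_injOn j (by simp) fun i hi i' hi' hj => hinj (Prod.ext hj ?_)
      simp only [coe_filter, mem_univ, true_and, Set.mem_ofPred_eq] at hi hi'
      exact le_antisymm (hmax hi' i hj) (hmax hi i' hj.symm)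
    have hsplit := card_filter_add_card_filter_not (s := univ) (· ∈ D)
    simp only [filter_mem_eq_inter, univ_inter, card_univ] at hsplit
    omega

theorem SimpleGraph.exists_isMatching_card_le_ncard_edgeSet {α β : Type*} {H : SimpleGraph α}
    [Fintype β] {f h : β → α} (hf : Injective f) (hh : Injective h) (hfh : ∀ x y, f x ≠ h y)
    (hadj : ∀ x, H.Adj (f x) (h x)) :
    ∃ M : H.Subgraph, M.IsMatching ∧ Fintype.card β ≤ M.edgeSet.ncard := by
  refine ⟨⨆ x, H.subgraphOfAdj (hadj x),
    Subgraph.IsMatching.iSup (fun x => .subgraphOfAdj _) fun x y hxy => ?_, ?_⟩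
  · refine Set.disjoint_of_subset (Subgraph.support_subset_verts _)
      (Subgraph.support_subset_verts _) ?_
    simp only [subgraphOfAdj_verts, Set.disjoint_insert_left, Set.disjoint_insert_right,
      Set.disjoint_singleton, Set.mem_insert_iff, Set.mem_singleton_iff]
    grind [hf.ne hxy, hh.ne hxy, hfh x y, hfh y x]
  · rw [Subgraph.edgeSet_iSup]
    simp only [edgeSet_subgraphOfAdj, Set.iUnion_singleton_eq_range]
    rw [Set.ncard_range_of_injective, Nat.card_eq_fintype_card]
    intro x y hxy
    rcases Sym2.eq_iff.1 hxy with ⟨h1, -⟩ | ⟨h1, -⟩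
    · exact hf h1
    · exact absurd h1 (hfh x y)

namespace PartialCube

variable {V ι : Type*}

def semicube (μ : V → ι → Bool) (s : ι × Bool) : Set V := {v | μ v s.1 = s.2}

def opp (s : ι × Bool) : ι × Bool := (s.1, !s.2)

@[simp] lemma opp_opp (s : ι × Bool) : opp (opp s) = s := by simp [opp]

lemma semicube_opp (μ : V → ι → Bool) (s : ι × Bool) :
    semicube μ (opp s) = (semicube μ s)ᶜ := by
  ext v
  simp [semicube, opp, Bool.eq_not_iff]

@[simps]
def semicubeGraph (μ : V → ι → Bool) : SimpleGraph (ι × Bool) where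
  Adj s t := s ≠ t ∧ semicube μ s ∪ semicube μ t = Set.univ ∧
    (semicube μ s ∩ semicube μ t).Nonempty
  symm.symm _ _ h := ⟨h.1.symm, Set.union_comm .. ▸ h.2.1, Set.inter_comm .. ▸ h.2.2⟩
  loopless.irrefl _ h := h.1 rfl

lemma semicubeGraph_adj_opp_iff {μ : V → ι → Bool} {s t : ι × Bool} :
    (semicubeGraph μ).Adj (opp s) t ↔ opp s ≠ t ∧ semicube μ s ⊂ semicube μ t := by
  rw [semicubeGraph_adj, semicube_opp, ← Set.compl_subset_iff_union, compl_compl, Set.inter_comm,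
    Set.inter_compl_nonempty_iff, Set.ssubset_def]

theorem exists_sum_natAbs_eq_hammingDist {K : Type*} [Fintype ι] [Fintype K]
    (μ : V → ι → Bool) (κ : ι → K) (b : ι → Bool)
    (hnest : ∀ i j, κ i = κ j → semicube μ (i, b i) ⊆ semicube μ (j, b j) ∨
      semicube μ (j, b j) ⊆ semicube μ (i, b i)) :
    ∃ g : V → K → ℤ, ∀ u v, hammingDist (μ u) (μ v) = ∑ k, (g u k - g v k).natAbs := by
  classical
  let x (w : V) (i : ι) : ℤ := if μ w i = b i then 1 else 0
  refine ⟨fun w k => ∑ i with κ i = k, x w i, fun u v => ?_⟩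
  have hsign : ∀ i j, κ i = κ j → 0 ≤ (x u i - x v i) * (x u j - x v j) := by
    intro i j hij
    rcases hnest i j hij with h | h <;>
    · have hu := @h u
      have hv := @h v
      simp only [semicube, Set.mem_ofPred_eq] at hu hv
      simp only [x]
      split_ifs <;> simp_all
  calc hammingDist (μ u) (μ v) = ∑ i, (x u i - x v i).natAbs := by
        rw [hammingDist, card_filter]
        refine sum_congr rfl fun i _ => ?_
        simp only [x]
        cases μ u i <;> cases μ v i <;> cases b i <;> simp
    _ = ∑ k, ∑ i with κ i = k, (x u i - x v i).natAbs := (sum_fiberwise _ κ _).symm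
    _ = ∑ k, (∑ i with κ i = k, x u i - ∑ i with κ i = k, x v i).natAbs := by
      refine sum_congr rfl fun k _ => ?_
      rw [← sum_sub_distrib, natAbs_sum_of_forall_mul_nonneg]
      intro i hi j hj
      simp only [mem_filter, mem_univ, true_and] at hi hj
      exact hsign i j (hi.trans hj.symm)

section Chains

variable {μ : V → ι → Bool} {M : (semicubeGraph μ).Subgraph}

def ChainSucc (M : (semicubeGraph μ).Subgraph) (s t : ι × Bool) : Prop := M.Adj (opp s) t

lemma ChainSucc.semicube_ssubset {s t : ι × Bool} (h : ChainSucc M s t) :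
    semicube μ s ⊂ semicube μ t :=
  (semicubeGraph_adj_opp_iff.1 (M.adj_sub h)).2

lemma chainSucc_opp_opp {s t : ι × Bool} : ChainSucc M (opp t) (opp s) ↔ ChainSucc M s t := by
  rw [ChainSucc, ChainSucc, opp_opp]
  exact M.adj_comm _ _

lemma exists_chainSucc_iff (hM : M.IsMatching) {t : ι × Bool} :
    (∃ s, ChainSucc M s t) ↔ t ∈ M.verts := by
  refine ⟨fun ⟨s, h⟩ => M.edge_vert h.symm, fun ht => ?_⟩
  obtain ⟨p, hp, -⟩ := hM ht
  exact ⟨opp p, by rw [ChainSucc, opp_opp]; exact hp.symm⟩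

lemma chainSucc_rightUnique (hM : M.IsMatching) : Relator.RightUnique (ChainSucc M) :=
  fun _ _ _ h h' => hM.eq_of_adj_left h h'

lemma chainSucc_leftUnique (hM : M.IsMatching) : Relator.LeftUnique (ChainSucc M) :=
  fun _ _ _ h h' => by simpa using congrArg opp (hM.eq_of_adj_right h h')

lemma semicube_subset_of_reflTransGen {s t : ι × Bool} (h : ReflTransGen (ChainSucc M) s t) :
    semicube μ s ⊆ semicube μ t := by
  induction h with
  | refl => rfl
  | tail _ hst ih => exact ih.trans hst.semicube_ssubset.subset

lemma semicube_subset_or_subset_of_reflTransGen (hM : M.IsMatching) {r s t : ι × Bool}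
    (hs : ReflTransGen (ChainSucc M) r s) (ht : ReflTransGen (ChainSucc M) r t) :
    semicube μ s ⊆ semicube μ t ∨ semicube μ t ⊆ semicube μ s :=
  (hs.total_of_right_unique (chainSucc_rightUnique hM) ht).imp
    semicube_subset_of_reflTransGen semicube_subset_of_reflTransGen

lemma eq_of_reflTransGen_of_notMem_verts (hM : M.IsMatching) {r r' s : ι × Bool}
    (hr : r ∉ M.verts) (hr' : r' ∉ M.verts)
    (h : ReflTransGen (ChainSucc M) r s) (h' : ReflTransGen (ChainSucc M) r' s) : r = r' := by
  have root_eq : ∀ {a b}, b ∉ M.verts → ReflTransGen (ChainSucc M) a b → a = b :=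
    fun hb hab => (hab.cases_tail.resolve_right fun ⟨c, _, hcb⟩ =>
      hb ((exists_chainSucc_iff hM).1 ⟨c, hcb⟩)).symm
  have hswap := ReflTransGen.total_of_right_unique (r := swap (ChainSucc M))
    (fun _ _ _ h h' => chainSucc_leftUnique hM h h') (reflTransGen_swap.2 h)
    (reflTransGen_swap.2 h')
  rcases hswap with h'' | h''
  · exact (root_eq hr (reflTransGen_swap.1 h'')).symm
  · exact root_eq hr' (reflTransGen_swap.1 h'')

lemma ncard_edgeSet_le_card_filter_mem_verts [Fintype ι] (hM : M.IsMatching) {b : ι → Bool}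
    [DecidablePred fun i => (i, b i) ∈ M.verts]
    (hb : ∀ s t, ChainSucc M s t → (s.2 = b s.1 ↔ t.2 = b t.1)) :
    M.edgeSet.ncard ≤ #{i | (i, b i) ∈ M.verts} := by
  let f (i : ι) : Sym2 (ι × Bool) :=
    if h : (i, b i) ∈ M.verts then hM.toEdge ⟨_, h⟩ else s((i, b i), (i, b i))
  have hf : ∀ i y, M.Adj (i, b i) y →
      s((i, b i), y) ∈ f '' ↑({i | (i, b i) ∈ M.verts} : Finset ι) :=
    fun i y h => ⟨i, by simpa using h.fst_mem, by
      simp only [f, dif_pos h.fst_mem, hM.toEdge_eq_of_adj h]⟩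
  have hsub : M.edgeSet ⊆ f '' ↑({i | (i, b i) ∈ M.verts} : Finset ι) := by
    intro e he
    induction e using Sym2.ind with
    | _ x y =>
    have hxy : M.Adj x y := he
    -- each edge has exactly one end with the orientation `b`
    have hone := hb _ _ (show ChainSucc M (opp y) x by rw [ChainSucc, opp_opp]; exact hxy.symm)
    obtain ⟨i, c⟩ := x
    obtain ⟨j, d⟩ := y
    by_cases hc : c = b i
    · subst hc
      exact hf i _ hxy
    · have hd : d = b j := by simpa [opp] using hone.not.2 hc
      subst hd
      rw [Sym2.eq_swap]
      exact hf j _ hxy.symm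
  calc M.edgeSet.ncard ≤ (f '' _).ncard := Set.ncard_le_ncard hsub (Set.toFinite _)
    _ ≤ _ := Set.ncard_image_le (Finset.finite_toSet _)
    _ = _ := Set.ncard_coe_finset _

variable [Finite V]

lemma wellFounded_chainSucc : WellFounded (ChainSucc M) :=
  Subrelation.wf (fun h => h.semicube_ssubset) (InvImage.wf (semicube μ) wellFounded_lt)

lemma exists_reflTransGen_notMem_verts (hM : M.IsMatching) (s : ι × Bool) :
    ∃ r ∉ M.verts, ReflTransGen (ChainSucc M) r s := by
  induction s using (wellFounded_chainSucc (M := M)).induction with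
  | _ s ih =>
  by_cases hs : s ∈ M.verts
  · obtain ⟨p, hp⟩ := (exists_chainSucc_iff hM).2 hs
    obtain ⟨r, hr, hrp⟩ := ih p hp
    exact ⟨r, hr, hrp.tail hp⟩
  · exact ⟨s, hs, .refl⟩

noncomputable def chainRoot (hM : M.IsMatching) (s : ι × Bool) : ι × Bool :=
  (exists_reflTransGen_notMem_verts hM s).choose

lemma chainRoot_notMem_verts (hM : M.IsMatching) (s : ι × Bool) : chainRoot hM s ∉ M.verts :=
  (exists_reflTransGen_notMem_verts hM s).choose_spec.1

lemma reflTransGen_chainRoot (hM : M.IsMatching) (s : ι × Bool) :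
    ReflTransGen (ChainSucc M) (chainRoot hM s) s :=
  (exists_reflTransGen_notMem_verts hM s).choose_spec.2

lemma chainRoot_eq_of_chainSucc (hM : M.IsMatching) {s t : ι × Bool} (h : ChainSucc M s t) :
    chainRoot hM t = chainRoot hM s :=
  eq_of_reflTransGen_of_notMem_verts hM (chainRoot_notMem_verts hM t)
    (chainRoot_notMem_verts hM s) (reflTransGen_chainRoot hM t)
    ((reflTransGen_chainRoot hM s).tail h)

lemma chainRoot_opp_ne (hM : M.IsMatching) (hne : ∀ s, (semicube μ s).Nonempty)
    (s : ι × Bool) : chainRoot hM (opp s) ≠ chainRoot hM s := by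
  intro h
  have hsub := semicube_subset_or_subset_of_reflTransGen hM (reflTransGen_chainRoot hM s)
    (h ▸ reflTransGen_chainRoot hM (opp s))
  rw [semicube_opp] at hsub
  rcases hsub with hsub | hsub
  · obtain ⟨v, hv⟩ := hne s
    exact hsub hv hv
  · obtain ⟨v, hv⟩ := hne (opp s)
    rw [semicube_opp] at hv
    exact hv (hsub hv)

lemma exists_chainSucc_invariant_orientation [Fintype ι] (hM : M.IsMatching)
    (hne : ∀ s, (semicube μ s).Nonempty) :
    ∃ b : ι → Bool, ∀ s t, ChainSucc M s t → (s.2 = b s.1 ↔ t.2 = b t.1) := by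
  let key (s : ι × Bool) : Fin _ := Fintype.equivFin (ι × Bool) (chainRoot hM s)
  have hkey : ∀ s, key (opp s) ≠ key s :=
    fun s h => chainRoot_opp_ne hM hne s ((Fintype.equivFin _).injective h)
  refine ⟨fun i => decide (key (i, true) < key (i, false)), ?_⟩
  have horient : ∀ s : ι × Bool,
      s.2 = decide (key (s.1, true) < key (s.1, false)) ↔ key s < key (opp s) := by
    rintro ⟨i, _ | _⟩
    · simp only [Bool.false_eq, decide_eq_false_iff_not, not_lt, opp, Bool.not_false]
      exact ⟨fun h => lt_of_le_of_ne h (hkey (i, true)), le_of_lt⟩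
    · simp [opp]
  intro s t h
  rw [horient, horient]
  simp only [key, chainRoot_eq_of_chainSucc hM h,
    chainRoot_eq_of_chainSucc hM (chainSucc_opp_opp.2 h)]

theorem exists_latticeEmbedding_of_isMatching [Fintype ι] (hM : M.IsMatching)
    (hne : ∀ s, (semicube μ s).Nonempty) :
    ∃ g : V → Fin (Fintype.card ι - M.edgeSet.ncard) → ℤ,
      ∀ u v, hammingDist (μ u) (μ v) = ∑ k, (g u k - g v k).natAbs := by
  classical
  obtain ⟨b, hb⟩ := exists_chainSucc_invariant_orientation hM hne
  have hb_chain : ∀ {s t}, ReflTransGen (ChainSucc M) s t → (s.2 = b s.1 ↔ t.2 = b t.1) := by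
    intro s t h
    induction h with
    | refl => rfl
    | tail _ hst ih => exact ih.trans (hb _ _ hst)
  let ρ (i : ι) : ι × Bool := chainRoot hM (i, b i)
  have hρ : ∀ i, (ρ i).2 = b (ρ i).1 := fun i => (hb_chain (reflTransGen_chainRoot hM _)).2 rfl
  let S : Finset ι := {j | (j, b j) ∉ M.verts}
  have hS : ∀ i, (ρ i).1 ∈ S := fun i => by
    simpa [S, ← hρ i] using chainRoot_notMem_verts hM (i, b i)
  have hcard : #S ≤ Fintype.card ι - M.edgeSet.ncard := by
    have hedge := ncard_edgeSet_le_card_filter_mem_verts hM hb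
    have hsplit := card_filter_add_card_filter_not (s := univ) (fun i => (i, b i) ∈ M.verts)
    rw [card_univ] at hsplit
    simp only [S]
    omega
  let κ (i : ι) : Fin _ := Fin.castLE hcard (S.equivFin ⟨(ρ i).1, hS i⟩)
  refine exists_sum_natAbs_eq_hammingDist μ κ b fun i j hij => ?_
  have h1 : (ρ i).1 = (ρ j).1 := by simpa [κ] using hij
  have hρij : ρ i = ρ j := Prod.ext h1 (by rw [hρ i, hρ j, h1])
  have hj : ReflTransGen (ChainSucc M) (ρ j) (j, b j) := reflTransGen_chainRoot hM _
  rw [← hρij] at hj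
  exact semicube_subset_or_subset_of_reflTransGen hM (reflTransGen_chainRoot hM _) hj

end Chains

section LowerBound

variable {K : Type*} [Fintype ι] {G : SimpleGraph V} {μ : V → ι → Bool}

lemma exists_adj_forall_ne_iff (hconn : G.Connected)
    (hiso : ∀ u v, G.dist u v = hammingDist (μ u) (μ v))
    (hne : ∀ s, (semicube μ s).Nonempty) (i : ι) :
    ∃ x y, G.Adj x y ∧ ∀ k, μ x k ≠ μ y k ↔ k = i := by
  obtain ⟨a, ha⟩ := hne (i, false)
  obtain ⟨a', ha'⟩ := hne (i, true)
  obtain ⟨d, -, hd1, hd2⟩ := (hconn.preconnected a a').some.exists_boundary_dart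
    (semicube μ (i, false)) ha (by simp_all [semicube])
  have hi : μ d.fst i ≠ μ d.snd i := by simp_all [semicube]
  have h1 : hammingDist (μ d.fst) (μ d.snd) = 1 := by
    rw [← hiso, SimpleGraph.dist_eq_one_iff_adj]
    exact d.adj
  obtain ⟨k₀, hk₀⟩ := card_eq_one.1 h1
  have hmem : ∀ k, μ d.fst k ≠ μ d.snd k ↔ k = k₀ := fun k => by
    simpa using Finset.ext_iff.1 hk₀ k
  obtain rfl := (hmem i).1 hi
  exact ⟨d.fst, d.snd, d.adj, hmem⟩

lemma semicube_ne_of_ne (hconn : G.Connected)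
    (hiso : ∀ u v, G.dist u v = hammingDist (μ u) (μ v))
    (hne : ∀ s, (semicube μ s).Nonempty) {i i' : ι} (h : i ≠ i') (c c' : Bool) :
    semicube μ (i, c) ≠ semicube μ (i', c') := by
  intro heq
  obtain ⟨x, y, -, hμ⟩ := exists_adj_forall_ne_iff hconn hiso hne i
  have hx := Set.ext_iff.1 heq x
  have hy := Set.ext_iff.1 heq y
  have hi' : μ x i' = μ y i' := not_not.1 fun h' => h ((hμ i').1 h').symm
  simp only [semicube, Set.mem_ofPred_eq, hi'] at hx hy
  apply (hμ i).2 rfl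
  cases hxi : μ x i <;> cases hyi : μ y i <;> cases c <;> simp_all

lemma coord_eq_iff_threshold_le [Fintype K] {g : V → K → ℤ}
    (hiso : ∀ u v, G.dist u v = hammingDist (μ u) (μ v))
    (hg : ∀ u v, G.dist u v = ∑ k, (g u k - g v k).natAbs) {x y : V} {i : ι} {j : K}
    (hμ : ∀ k, μ x k ≠ μ y k ↔ k = i) (hgj : ∀ k ≠ j, g x k = g y k) (hj : g x j + 1 = g y j)
    (w : V) : μ w i = μ y i ↔ g y j ≤ g w j := by
  rw [← hammingDist_lt_hammingDist_iff hμ, ← sum_natAbs_sub_lt_iff hgj hj, ← hiso, ← hiso, hg,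
    hg]

lemma exists_threshold_cut [Fintype K] (hconn : G.Connected)
    (hiso : ∀ u v, G.dist u v = hammingDist (μ u) (μ v))
    (hne : ∀ s, (semicube μ s).Nonempty) {g : V → K → ℤ}
    (hg : ∀ u v, G.dist u v = ∑ k, (g u k - g v k).natAbs) (i : ι) :
    ∃ (b : Bool) (j : K) (t : ℤ), ∀ w, μ w i = b ↔ t ≤ g w j := by
  obtain ⟨x, y, hxy, hμ⟩ := exists_adj_forall_ne_iff hconn hiso hne i
  have h1 : ∑ k, (g x k - g y k).natAbs = 1 := by
    rw [← hg, SimpleGraph.dist_eq_one_iff_adj]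
    exact hxy
  obtain ⟨j, hj, hk⟩ := exists_eq_one_of_sum_eq_one h1
  have hgj : ∀ k ≠ j, g x k = g y k := fun k hk' => by have := hk k hk'; omega
  rcases Int.natAbs_eq_iff.1 hj with hj' | hj'
  · exact ⟨μ x i, j, g x j, coord_eq_iff_threshold_le hiso hg
      (fun k => by rw [ne_comm]; exact hμ k) (fun k hk' => (hgj k hk').symm) (by omega)⟩
  · exact ⟨μ y i, j, g y j, coord_eq_iff_threshold_le hiso hg hμ hgj (by omega)⟩

lemma semicubeGraph_adj_of_lt {g : V → K → ℤ} {b : ι → Bool} {j : ι → K} {t : ι → ℤ}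
    (hconn : G.Connected) (hiso : ∀ u v, G.dist u v = hammingDist (μ u) (μ v))
    (hne : ∀ s, (semicube μ s).Nonempty) (hcut : ∀ i w, μ w i = b i ↔ t i ≤ g w (j i))
    {i n : ι} (hj : j n = j i) (ht : t i < t n) :
    (semicubeGraph μ).Adj (i, b i) (opp (n, b n)) := by
  have hin : i ≠ n := by rintro rfl; exact lt_irrefl _ ht
  have hsub : semicube μ (n, b n) ⊆ semicube μ (i, b i) := fun w hw => by
    have := (hcut n w).1 hw
    exact (hcut i w).2 (by rw [hj] at this; omega)
  exact (semicubeGraph_adj_opp_iff.2 ⟨fun h => hin (congrArg Prod.fst h).symm,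
    hsub.ssubset_of_ne (semicube_ne_of_ne hconn hiso hne hin.symm _ _)⟩).symm

theorem exists_isMatching_of_latticeEmbedding [Fintype K] (hconn : G.Connected)
    (hiso : ∀ u v, G.dist u v = hammingDist (μ u) (μ v))
    (hne : ∀ s, (semicube μ s).Nonempty) (g : V → K → ℤ)
    (hg : ∀ u v, G.dist u v = ∑ k, (g u k - g v k).natAbs) :
    ∃ M : (semicubeGraph μ).Subgraph, M.IsMatching ∧
      Fintype.card ι ≤ M.edgeSet.ncard + Fintype.card K := by
  classical
  choose b j t hcut using exists_threshold_cut hconn hiso hne hg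
  have hinj : Injective fun i => (j i, t i) := fun i i' h => by
    by_contra hii'
    refine semicube_ne_of_ne hconn hiso hne hii' (b i) (b i') (Set.ext fun w => ?_)
    obtain ⟨hj, ht⟩ := Prod.mk.inj h
    simp only [semicube, Set.mem_ofPred_eq, hcut, hj, ht]
  obtain ⟨D, nxt, hnxt_inj, hnxt, hcard⟩ := exists_injOn_succ_same_fiber hinj
  obtain ⟨M, hM, hM_card⟩ := SimpleGraph.exists_isMatching_card_le_ncard_edgeSet
    (H := semicubeGraph μ) (f := fun i : D => (i.1, b i.1))
    (h := fun i : D => opp (nxt i, b (nxt i)))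
    (fun x y h => Subtype.ext (congrArg Prod.fst h))
    (fun x y h => Subtype.ext (hnxt_inj x.2 y.2 (congrArg Prod.fst h)))
    (fun x y h => by
      obtain ⟨h1, h2⟩ := Prod.mk.inj h
      rw [h1] at h2
      simp at h2)
    (fun i => semicubeGraph_adj_of_lt hconn hiso hne hcut (hnxt i i.2).1 (hnxt i i.2).2)
  rw [Fintype.card_coe] at hM_card
  exact ⟨M, hM, by omega⟩

end LowerBound

end PartialCube

theorem stmt_5_general {V : Type*} [Fintype V] (G : SimpleGraph V) (hconn : G.Connected)
    (τ : ℕ) (μ : V → Fin τ → Bool)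
    (hiso : ∀ u v : V, G.dist u v = hammingDist (μ u) (μ v))
    (hsurj : ∀ (i : Fin τ) (b : Bool), ∃ v : V, μ v i = b)
    (Sc : SimpleGraph (Fin τ × Bool))
    (hSc : ∀ s t : Fin τ × Bool, Sc.Adj s t ↔ s ≠ t ∧
        {v : V | μ v s.1 = s.2} ∪ {v : V | μ v t.1 = t.2} = Set.univ ∧
        ({v : V | μ v s.1 = s.2} ∩ {v : V | μ v t.1 = t.2}).Nonempty)
    (M : Sc.Subgraph) (hM : M.IsMatching)
    (hmax : ∀ M' : Sc.Subgraph, M'.IsMatching → M'.edgeSet.ncard ≤ M.edgeSet.ncard) :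
    IsLeast {d : ℕ | ∃ g : V → Fin d → ℤ,
        ∀ u v : V, G.dist u v = ∑ i, (g u i - g v i).natAbs}
      (τ - M.edgeSet.ncard) := by
  have hne : ∀ s, (PartialCube.semicube μ s).Nonempty := fun s => hsurj s.1 s.2
  obtain rfl : Sc = PartialCube.semicubeGraph μ := by
    ext s t
    exact hSc s t
  constructor
  · have hemb := PartialCube.exists_latticeEmbedding_of_isMatching hM hne
    rw [Fintype.card_fin] at hemb
    obtain ⟨g, hg⟩ := hemb
    exact ⟨g, fun u v => (hiso u v).trans (hg u v)⟩
  · rintro d ⟨g, hg⟩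
    obtain ⟨M', hM', hcard⟩ := PartialCube.exists_isMatching_of_latticeEmbedding hconn hiso hne g hg
    rw [Fintype.card_fin, Fintype.card_fin] at hcard
    have := hmax M' hM'
    omega

/-- Eppstein's lattice dimension theorem: if `G` is a partial cube with isometric
dimension `τ` (witnessed by an isometric embedding `μ` into `{0,1}^τ` all of whose
coordinates are surjective), and `M` is a maximum matching in the semicube graph
`Sc(G)` (whose vertices are the `2τ` semicubes, two semicubes being adjacent when
they cover all vertices non-disjointly), then the lattice dimension of `G` — the least
`d` such that `G` embeds isometrically into `ℤ^d` with L1 distance — is `τ - |M|`. -/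
theorem stmt_5 {V : Type*} [Fintype V] (G : SimpleGraph V) (hconn : G.Connected)
    (τ : ℕ) (μ : V → Fin τ → Bool)
    (hiso : ∀ u v : V, G.dist u v = hammingDist (μ u) (μ v))
    (hsurj : ∀ (i : Fin τ) (b : Bool), ∃ v : V, μ v i = b)
    (hmin : IsLeast {t : ℕ | ∃ μ' : V → Fin t → Bool,
        ∀ u v : V, G.dist u v = hammingDist (μ' u) (μ' v)} τ)
    (Sc : SimpleGraph (Fin τ × Bool))
    (hSc : ∀ s t : Fin τ × Bool, Sc.Adj s t ↔ s ≠ t ∧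
        {v : V | μ v s.1 = s.2} ∪ {v : V | μ v t.1 = t.2} = Set.univ ∧
        ({v : V | μ v s.1 = s.2} ∩ {v : V | μ v t.1 = t.2}).Nonempty)
    (M : Sc.Subgraph) (hM : M.IsMatching)
    (hmax : ∀ M' : Sc.Subgraph, M'.IsMatching → M'.edgeSet.ncard ≤ M.edgeSet.ncard) :
    IsLeast {d : ℕ | ∃ g : V → Fin d → ℤ,
        ∀ u v : V, G.dist u v = ∑ i, (g u i - g v i).natAbs}
      (τ - M.edgeSet.ncard) :=
  stmt_5_general G hconn τ μ hiso hsurj Sc hSc M hM hmax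
end

section
/- When the projection construction is applied to a box L = [a_0,b_0] × ... × [a_{d−1},b_{d−1}] ∩ Z^d, the images occupy a contiguous range of integer x-coordinates and a contiguous range of integer y-coordinates, so the drawing fits in a bounding box of area at most n^2 where n = |L|. -/
noncomputable section

/-- The partial x-sum `Σ_{k<i} X_k p_k`. -/
def xpart {d : ℕ} (X : Fin d → ℤ) (i : Fin d) (p : Fin d → ℤ) : ℤ :=
  ∑ k ∈ Finset.univ.filter (fun k : Fin d => k < i), X k * p k

/-- The partial y-sum `Σ_{k>i} Y_k p_k`. -/
def ypart {d : ℕ} (Y : Fin d → ℤ) (i : Fin d) (p : Fin d → ℤ) : ℤ :=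
  ∑ k ∈ Finset.univ.filter (fun k : Fin d => i < k), Y k * p k

/-- The lslice `L_{i,j}`: points of `L` whose `i`-th coordinate equals `j`. -/
def lslice {d : ℕ} (L : Set (Fin d → ℤ)) (i : Fin d) (j : ℤ) : Set (Fin d → ℤ) :=
  {p ∈ L | p i = j}

/-- The recursive choice of the x-multipliers: `X_0 = 0` and, for `i > 0`, `X_i` is the
maximum over `j` (with both slices nonempty) of one plus the gap between the largest
partial x-sum over `L_{i,j-1}` and the smallest partial x-sum over `L_{i,j}`, so that
`X_i` exceeds the total x-extent of any lslice with smaller-index coordinates. -/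
def XSpec {d : ℕ} (L : Set (Fin d → ℤ)) (X : Fin d → ℤ) : Prop :=
  (∀ i : Fin d, i.val = 0 → X i = 0) ∧
  ∀ i : Fin d, i.val ≠ 0 →
    X i = sSup {z : ℤ | ∃ j : ℤ, (lslice L i j).Nonempty ∧ (lslice L i (j - 1)).Nonempty ∧
      z = 1 + sSup (xpart X i '' lslice L i (j - 1)) - sInf (xpart X i '' lslice L i j)}

/-- The symmetric choice of the y-multipliers, from larger index to smaller:
`Y_{d-1} = 0` and, for `i < d-1`, `Y_i` is defined from the partial y-sums. -/
def YSpec {d : ℕ} (L : Set (Fin d → ℤ)) (Y : Fin d → ℤ) : Prop :=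
  (∀ i : Fin d, i.val = d - 1 → Y i = 0) ∧
  ∀ i : Fin d, i.val ≠ d - 1 →
    Y i = sSup {z : ℤ | ∃ j : ℤ, (lslice L i j).Nonempty ∧ (lslice L i (j - 1)).Nonempty ∧
      z = 1 + sSup (ypart Y i '' lslice L i (j - 1)) - sInf (ypart Y i '' lslice L i j)}

/-!
On a box all slices `L_{i,j}` with `a i ≤ j ≤ b i` are translates of each other along
coordinate `i`, and the partial sum `xpart X i` ignores that coordinate; so the gap defining
`X i` is `1 + max - min` of `xpart X i` over the whole box, i.e.
`1 + ∑_{k<i} X k (b k - a k)` when `a i < b i`, and `X i = 0` otherwise. Hence the `X k` are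
place values of a mixed-radix numeral system with digits `p k ∈ [a k, b k]`: each is at most one
more than the span of the lower places, so `∑ X k p k` takes every value between its extremes,
and that range has length `1 + ∑ X k (b k - a k) ≤ ∏ (b k - a k + 1) = |L|`. The `Y k` are
place values for the reversed order of the indices.
-/

open Finset

section MixedRadix

variable {ι : Type*} {a b w : ι → ℤ}

-- The translates `c * j + [A, B]` for consecutive `j` abut or overlap because `c ≤ B - A + 1`.
lemma exists_mul_add_of_mem_Icc {c A B lo hi x : ℤ} (hc : c ≤ B - A + 1) (hlo : lo ≤ hi)
    (hx : x ∈ Set.Icc (c * lo + A) (c * hi + B)) :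
    ∃ j ∈ Set.Icc lo hi, ∃ y ∈ Set.Icc A B, x = c * j + y := by
  induction hi, hlo using Int.leInduction generalizing x with
  | base =>
    exact ⟨lo, ⟨le_rfl, le_rfl⟩, x - c * lo, ⟨by linarith [hx.1], by linarith [hx.2]⟩, by ring⟩
  | succ hi hlo ih =>
    by_cases h : x ≤ c * hi + B
    · obtain ⟨j, hj, y, hy, rfl⟩ := ih ⟨hx.1, h⟩
      exact ⟨j, ⟨hj.1, by linarith [hj.2]⟩, y, hy, rfl⟩
    · exact ⟨hi + 1, ⟨by linarith, le_rfl⟩, x - c * (hi + 1),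
        ⟨by linarith, by linarith [hx.2]⟩, by ring⟩

lemma update_mem_Icc [DecidableEq ι] {p : ι → ℤ} (hp : p ∈ Set.Icc a b) {i : ι} {j : ℤ}
    (hj : j ∈ Set.Icc (a i) (b i)) : Function.update p i j ∈ Set.Icc a b := by
  constructor <;> intro k <;> rcases eq_or_ne k i with rfl | hk <;> simp_all [hp.1 k, hp.2 k]

lemma sum_mul_update_of_notMem [DecidableEq ι] {s : Finset ι} {i : ι} (hi : i ∉ s)
    (p : ι → ℤ) (j : ℤ) : ∑ k ∈ s, w k * Function.update p i j k = ∑ k ∈ s, w k * p k :=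
  sum_congr rfl fun k hk => by
    rw [Function.update_of_ne (ne_of_mem_of_not_mem hk hi)]

lemma sum_mul_mem_Icc (s : Finset ι) (hw0 : ∀ k ∈ s, 0 ≤ w k) {p : ι → ℤ}
    (hp : p ∈ Set.Icc a b) :
    ∑ k ∈ s, w k * p k ∈ Set.Icc (∑ k ∈ s, w k * a k) (∑ k ∈ s, w k * b k) :=
  ⟨sum_le_sum fun k hk => mul_le_mul_of_nonneg_left (hp.1 k) (hw0 k hk),
    sum_le_sum fun k hk => mul_le_mul_of_nonneg_left (hp.2 k) (hw0 k hk)⟩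

lemma sSup_image_sum_mul_Icc (hab : a ≤ b) (s : Finset ι) (hw0 : ∀ k ∈ s, 0 ≤ w k) :
    sSup ((fun p : ι → ℤ => ∑ k ∈ s, w k * p k) '' Set.Icc a b) = ∑ k ∈ s, w k * b k :=
  IsGreatest.csSup_eq ⟨⟨b, Set.right_mem_Icc.2 hab, rfl⟩,
    by rintro _ ⟨p, hp, rfl⟩; exact (sum_mul_mem_Icc s hw0 hp).2⟩

lemma sInf_image_sum_mul_Icc (hab : a ≤ b) (s : Finset ι) (hw0 : ∀ k ∈ s, 0 ≤ w k) :
    sInf ((fun p : ι → ℤ => ∑ k ∈ s, w k * p k) '' Set.Icc a b) = ∑ k ∈ s, w k * a k :=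
  IsLeast.csInf_eq ⟨⟨a, Set.left_mem_Icc.2 hab, rfl⟩,
    by rintro _ ⟨p, hp, rfl⟩; exact (sum_mul_mem_Icc s hw0 hp).1⟩

lemma natCard_Icc_pi [Fintype ι] [DecidableEq ι] (hab : a ≤ b) :
    (Nat.card (Set.Icc a b) : ℤ) = ∏ k, (b k - a k + 1) := by
  rw [← Finset.coe_Icc, Nat.card_coe_set_eq, Set.ncard_coe_finset, Pi.card_Icc, Nat.cast_prod]
  refine prod_congr rfl fun k _ => ?_
  rw [Int.card_Icc, Int.toNat_of_nonneg (by linarith [hab k])]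
  ring

variable [LinearOrder ι]

def IsMixedRadix (a b w : ι → ℤ) (s : Finset ι) : Prop :=
  ∀ k ∈ s, w k ≤ 1 + ∑ j ∈ s.filter (· < k), w j * (b j - a j)

lemma isMixedRadix_insert_max_iff {s : Finset ι} {m : ι} (hm : ∀ x ∈ s, x < m) :
    IsMixedRadix a b w (insert m s) ↔
      w m ≤ ∑ k ∈ s, w k * b k - ∑ k ∈ s, w k * a k + 1 ∧ IsMixedRadix a b w s := by
  have hfilter : ∀ k ∈ s, (insert m s).filter (· < k) = s.filter (· < k) := fun k hk => by
    rw [filter_insert, if_neg (not_lt.2 (hm k hk).le)]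
  have hfilter_m : (insert m s).filter (· < m) = s := by
    rw [filter_insert, if_neg (lt_irrefl m), filter_true_of_mem hm]
  have hwidth :
      1 + ∑ k ∈ s, w k * (b k - a k) = ∑ k ∈ s, w k * b k - ∑ k ∈ s, w k * a k + 1 := by
    simp only [mul_sub, sum_sub_distrib]; ring
  simp only [IsMixedRadix, forall_mem_insert, hfilter_m, hwidth]
  exact and_congr_right fun _ => forall₂_congr fun k hk => by rw [hfilter k hk]

lemma image_sum_mul_Icc (hab : a ≤ b) (hw0 : ∀ k, 0 ≤ w k) (s : Finset ι)
    (hw : IsMixedRadix a b w s) :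
    (fun p : ι → ℤ => ∑ k ∈ s, w k * p k) '' Set.Icc a b =
      Set.Icc (∑ k ∈ s, w k * a k) (∑ k ∈ s, w k * b k) := by
  induction s using Finset.induction_on_max with
  | empty => simpa using (Set.nonempty_Icc.2 hab).image_const 0
  | insert m s hm ih =>
    have hms : m ∉ s := fun h => lt_irrefl m (hm m h)
    obtain ⟨hwm, hws⟩ := (isMixedRadix_insert_max_iff hm).1 hw
    refine Set.Subset.antisymm ?_ fun x hx => ?_
    · rintro _ ⟨p, hp, rfl⟩
      exact sum_mul_mem_Icc _ (fun k _ => hw0 k) hp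
    · simp only [sum_insert hms] at hx
      obtain ⟨j, hj, y, hy, rfl⟩ := exists_mul_add_of_mem_Icc hwm (hab m) hx
      obtain ⟨p, hp, rfl⟩ := (ih hws).symm ▸ hy
      refine ⟨Function.update p m j, update_mem_Icc hp hj, ?_⟩
      simp only [sum_insert hms, Function.update_self, sum_mul_update_of_notMem hms]

lemma sum_mul_sub_sum_mul_add_one_le_prod (hab : a ≤ b) (s : Finset ι)
    (hw : IsMixedRadix a b w s) :
    ∑ k ∈ s, w k * b k - ∑ k ∈ s, w k * a k + 1 ≤ ∏ k ∈ s, (b k - a k + 1) := by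
  induction s using Finset.induction_on_max with
  | empty => simp
  | insert m s hm ih =>
    have hms : m ∉ s := fun h => lt_irrefl m (hm m h)
    obtain ⟨hwm, hws⟩ := (isMixedRadix_insert_max_iff hm).1 hw
    have hW := ih hws
    have hδ : 0 ≤ b m - a m := sub_nonneg.2 (hab m)
    rw [sum_insert hms, sum_insert hms, prod_insert hms]
    nlinarith [mul_le_mul_of_nonneg_right hwm hδ, mul_le_mul_of_nonneg_left hW hδ]

end MixedRadix

section Slices

variable {d : ℕ} {a b : Fin d → ℤ}

/-- `XSpec L X` says `X i = sSup (sliceGaps L i (xpart X i))` for `i ≠ 0`. -/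
def sliceGaps (L : Set (Fin d → ℤ)) (i : Fin d) (f : (Fin d → ℤ) → ℤ) : Set ℤ :=
  {z : ℤ | ∃ j : ℤ, (lslice L i j).Nonempty ∧ (lslice L i (j - 1)).Nonempty ∧
    z = 1 + sSup (f '' lslice L i (j - 1)) - sInf (f '' lslice L i j)}

lemma lslice_Icc_nonempty_iff (hab : a ≤ b) {i : Fin d} {j : ℤ} :
    (lslice (Set.Icc a b) i j).Nonempty ↔ j ∈ Set.Icc (a i) (b i) :=
  ⟨fun ⟨_, hp, hpj⟩ => hpj ▸ ⟨hp.1 i, hp.2 i⟩,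
    fun hj => ⟨_, update_mem_Icc (Set.left_mem_Icc.2 hab) hj, Function.update_self ..⟩⟩

lemma image_lslice_Icc {f : (Fin d → ℤ) → ℤ} {i : Fin d}
    (hf : ∀ p j, f (Function.update p i j) = f p) {j : ℤ} (hj : j ∈ Set.Icc (a i) (b i)) :
    f '' lslice (Set.Icc a b) i j = f '' Set.Icc a b := by
  refine (Set.image_mono fun p hp => hp.1).antisymm ?_
  rintro _ ⟨p, hp, rfl⟩
  exact ⟨_, ⟨update_mem_Icc hp hj, Function.update_self ..⟩, hf p j⟩

lemma sliceGaps_Icc_subset (hab : a ≤ b) {f : (Fin d → ℤ) → ℤ} {i : Fin d}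
    (hf : ∀ p j, f (Function.update p i j) = f p) :
    sliceGaps (Set.Icc a b) i f ⊆ {1 + sSup (f '' Set.Icc a b) - sInf (f '' Set.Icc a b)} := by
  rintro _ ⟨j, hj, hj', rfl⟩
  rw [lslice_Icc_nonempty_iff hab] at hj hj'
  rw [image_lslice_Icc hf hj, image_lslice_Icc hf hj', Set.mem_singleton_iff]

lemma sSup_sliceGaps_Icc_mem (hab : a ≤ b) {f : (Fin d → ℤ) → ℤ} {i : Fin d}
    (hf : ∀ p j, f (Function.update p i j) = f p) :
    sSup (sliceGaps (Set.Icc a b) i f) ∈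
      Set.Icc 0 (1 + sSup (f '' Set.Icc a b) - sInf (f '' Set.Icc a b)) := by
  -- `sSup ∅ = 0` in `ℤ` covers `a i = b i`, where no two consecutive slices are nonempty.
  have hfin := (Set.finite_Icc a b).image f
  have hle := csInf_le_csSup ((Set.nonempty_Icc.2 hab).image f) hfin.bddBelow hfin.bddAbove
  rcases Set.subset_singleton_iff_eq.1 (sliceGaps_Icc_subset hab hf) with h | h <;>
    rw [h] <;> constructor <;> simp <;> linarith

lemma sSup_sliceGaps_sum_mul_le (hab : a ≤ b) {w : Fin d → ℤ} {s : Finset (Fin d)}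
    {i : Fin d} (hi : i ∉ s) (hw0 : ∀ k ∈ s, 0 ≤ w k) :
    sSup (sliceGaps (Set.Icc a b) i fun p => ∑ k ∈ s, w k * p k) ≤
      1 + ∑ k ∈ s, w k * (b k - a k) := by
  have h := (sSup_sliceGaps_Icc_mem hab (f := fun p => ∑ k ∈ s, w k * p k)
    (sum_mul_update_of_notMem hi)).2
  rw [sSup_image_sum_mul_Icc hab s hw0, sInf_image_sum_mul_Icc hab s hw0] at h
  simpa only [mul_sub, sum_sub_distrib, add_sub_assoc] using h

end Slices

section Multipliers

variable {d : ℕ} {a b X Y : Fin d → ℤ}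

lemma xpart_update (i : Fin d) (p : Fin d → ℤ) (j : ℤ) :
    xpart X i (Function.update p i j) = xpart X i p :=
  sum_mul_update_of_notMem (by simp) p j

lemma ypart_update (i : Fin d) (p : Fin d → ℤ) (j : ℤ) :
    ypart Y i (Function.update p i j) = ypart Y i p :=
  sum_mul_update_of_notMem (by simp) p j

lemma XSpec.nonneg (hab : a ≤ b) (hX : XSpec (Set.Icc a b) X) (i : Fin d) : 0 ≤ X i := by
  by_cases hi : i.val = 0
  · exact (hX.1 i hi).ge
  · rw [hX.2 i hi]
    exact (sSup_sliceGaps_Icc_mem hab (xpart_update i)).1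

lemma YSpec.nonneg (hab : a ≤ b) (hY : YSpec (Set.Icc a b) Y) (i : Fin d) : 0 ≤ Y i := by
  by_cases hi : i.val = d - 1
  · exact (hY.1 i hi).ge
  · rw [hY.2 i hi]
    exact (sSup_sliceGaps_Icc_mem hab (ypart_update i)).1

lemma XSpec.isMixedRadix (hab : a ≤ b) (hX : XSpec (Set.Icc a b) X) :
    IsMixedRadix a b X univ := by
  intro i _
  by_cases hi : i.val = 0
  · rw [hX.1 i hi]
    have := sum_nonneg fun k (_ : k ∈ univ.filter (· < i)) =>
      mul_nonneg (hX.nonneg hab k) (sub_nonneg.2 (hab k))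
    linarith
  · rw [hX.2 i hi]
    exact sSup_sliceGaps_sum_mul_le hab (by simp) fun k _ => hX.nonneg hab k

lemma YSpec.isMixedRadix (hab : a ≤ b) (hY : YSpec (Set.Icc a b) Y) :
    IsMixedRadix (ι := (Fin d)ᵒᵈ) a b Y univ := by
  rintro (i : Fin d) -
  show Y i ≤ 1 + ∑ k ∈ univ.filter (fun k : Fin d => i < k), Y k * (b k - a k)
  by_cases hi : i.val = d - 1
  · rw [hY.1 i hi]
    have := sum_nonneg fun k (_ : k ∈ univ.filter (fun k : Fin d => i < k)) =>
      mul_nonneg (hY.nonneg hab k) (sub_nonneg.2 (hab k))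
    linarith
  · rw [hY.2 i hi]
    exact sSup_sliceGaps_sum_mul_le hab (by simp) fun k _ => hY.nonneg hab k

end Multipliers

/-- Applied to a box `L = [a_0,b_0] × ⋯ × [a_{d-1},b_{d-1}] ∩ ℤ^d`, the projection
`p ↦ (X·p, Y·p)` produces images occupying a contiguous range of integer
x-coordinates and a contiguous range of integer y-coordinates, so the drawing fits in
a bounding box of area at most `n²` where `n = |L|`. -/
theorem stmt_15 {d : ℕ} (a b : Fin d → ℤ) (hab : ∀ i, a i ≤ b i)
    (L : Set (Fin d → ℤ)) (hbox : L = {p | ∀ i, p i ∈ Set.Icc (a i) (b i)})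
    (X Y : Fin d → ℤ) (hX : XSpec L X) (hY : YSpec L Y) :
    ∃ xlo xhi ylo yhi : ℤ,
      (fun p : Fin d → ℤ => ∑ k, X k * p k) '' L = Set.Icc xlo xhi ∧
      (fun p : Fin d → ℤ => ∑ k, Y k * p k) '' L = Set.Icc ylo yhi ∧
      (xhi - xlo + 1) * (yhi - ylo + 1) ≤ (Nat.card L : ℤ) ^ 2 := by
  obtain rfl : L = Set.Icc a b := by
    rw [hbox]; ext p; simp only [Set.mem_ofPred_eq, Set.mem_Icc, Pi.le_def, forall_and]
  have hXr := hX.isMixedRadix hab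
  have hYr := hY.isMixedRadix hab
  have hYimage : (fun p : Fin d → ℤ => ∑ k, Y k * p k) '' Set.Icc a b =
      Set.Icc (∑ k, Y k * a k) (∑ k, Y k * b k) :=
    image_sum_mul_Icc (ι := (Fin d)ᵒᵈ) hab (hY.nonneg hab) univ hYr
  have hYwidth : ∑ k, Y k * b k - ∑ k, Y k * a k + 1 ≤ ∏ k, (b k - a k + 1) :=
    sum_mul_sub_sum_mul_add_one_le_prod (ι := (Fin d)ᵒᵈ) hab univ hYr
  have hYlo : ∑ k, Y k * a k ≤ ∑ k, Y k * b k :=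
    (sum_mul_mem_Icc univ (fun k _ => hY.nonneg hab k) (Set.left_mem_Icc.2 hab)).2
  refine ⟨_, _, _, _, image_sum_mul_Icc hab (hX.nonneg hab) univ hXr, hYimage, ?_⟩
  rw [natCard_Icc_pi hab, sq]
  exact mul_le_mul (sum_mul_sub_sum_mul_add_one_le_prod hab univ hXr) hYwidth (by linarith)
    (prod_nonneg fun k _ => by linarith [hab k])
end
end

section
/- A closed polygonal curve in the plane all of whose turning angles at vertices are strictly positive (left turns) and whose total turning is exactly 360 degrees is the boundary of a strictly convex polygon; in particular it is simple (non-self-crossing). -/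
/-!
Fix an edge `e = v (i + 1) - v i`. The edge `t` steps further along is a positive multiple of
`e` rotated by the cumulative turning `α t`, which increases strictly from `α 0 = 0` to
`α k = 2π`; hence `cross e` of that edge is a positive multiple of `sin (α t)`, so these cross
products are nonnegative up to some index and negative afterwards. The cross products of `e`
with `v j - v i` are the partial sums of this sequence, whose total is `0` because the polygon
closes up, so each of them with `j ∉ {i, i + 1}` is positive: every vertex lies strictly to
the left of every edge. Simplicity follows, since the line through an edge then misses every
non-adjacent edge and meets an adjacent one only at their common vertex.
-/

/-- The planar cross product of two vectors in `ℂ ≅ ℝ²`. -/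
def cross (a b : ℂ) : ℝ := a.re * b.im - a.im * b.re

open Finset Complex
open scoped Real

lemma cross_eq_im_conj_mul (a b : ℂ) : cross a b = (starRingEnd ℂ a * b).im := by
  simp only [cross, mul_im, conj_re, conj_im]; ring

lemma cross_self_eq_zero (a : ℂ) : cross a a = 0 := by
  simp only [cross]; ring

lemma cross_zero_right (a : ℂ) : cross a 0 = 0 := by
  simp [cross]

lemma cross_add_right (a b c : ℂ) : cross a (b + c) = cross a b + cross a c := by
  simp only [cross, add_re, add_im]; ring

lemma cross_sub_right (a b c : ℂ) : cross a (b - c) = cross a b - cross a c := by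
  simp only [cross, sub_re, sub_im]; ring

lemma cross_smul_right (a b : ℂ) (θ : ℝ) : cross a (θ • b) = θ * cross a b := by
  simp only [cross, real_smul, mul_re, mul_im, ofReal_re, ofReal_im]; ring

lemma cross_sum_right {ι : Type*} (a : ℂ) (s : Finset ι) (f : ι → ℂ) :
    cross a (∑ t ∈ s, f t) = ∑ t ∈ s, cross a (f t) := by
  simp only [cross_eq_im_conj_mul, mul_sum, im_sum]

lemma cross_mul_self (a c : ℂ) : cross a (c * a) = normSq a * c.im := by
  simp only [cross, mul_re, mul_im, normSq_apply]; ring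

lemma cross_sub_eq_zero_of_mem_segment {p q x : ℂ} (hx : x ∈ segment ℝ p q) :
    cross (q - p) (x - p) = 0 := by
  obtain ⟨θ, -, rfl⟩ := segment_eq_image' ℝ p q ▸ hx
  rw [add_sub_cancel_left, cross_smul_right, cross_self_eq_zero, mul_zero]

lemma eq_right_of_mem_segment_of_cross_sub_eq_zero {a p b c x : ℂ} (hx : x ∈ segment ℝ b c)
    (hb : 0 < cross a (b - p)) (hc : 0 ≤ cross a (c - p)) (hx0 : cross a (x - p) = 0) :
    x = c := by
  obtain ⟨θ, ⟨hθ0, hθ1⟩, rfl⟩ := segment_eq_image' ℝ b c ▸ hx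
  have hsplit : cross a (b + θ • (c - b) - p) =
      (1 - θ) * cross a (b - p) + θ * cross a (c - p) := by
    simp only [cross_sub_right, cross_add_right, cross_smul_right]
    ring
  have hθ : θ = 1 := by nlinarith
  simp [hθ]

lemma exists_pos_mul_exp_sum_arg (z : ℕ → ℂ) (hz : ∀ m, z m ≠ 0) (m : ℕ) :
    ∃ ρ : ℝ, 0 < ρ ∧
      z m = ρ * exp ((∑ t ∈ range m, arg (z (t + 1) / z t) : ℝ) * I) * z 0 := by
  induction m with
  | zero => exact ⟨1, one_pos, by simp⟩
  | succ m ih =>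
    obtain ⟨ρ, hρ, hm⟩ := ih
    refine ⟨‖z (m + 1) / z m‖ * ρ, mul_pos (norm_pos_iff.2 (div_ne_zero (hz _) (hz m))) hρ, ?_⟩
    set w := z (m + 1) / z m
    calc z (m + 1) = (‖w‖ * exp (arg w * I)) * z m := by
          rw [norm_mul_exp_arg_mul_I, div_mul_cancel₀ _ (hz m)]
      _ = (‖w‖ * exp (arg w * I)) *
            (ρ * exp ((∑ t ∈ range m, arg (z (t + 1) / z t) : ℝ) * I) * z 0) := by
          rw [← hm]
      _ = _ := by
          rw [sum_range_succ, ofReal_add, add_mul, exp_add]; push_cast; ring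

lemma exists_cross_eq_mul_sin_sum_arg (z : ℕ → ℂ) (hz : ∀ m, z m ≠ 0) :
    ∃ c : ℕ → ℝ, (∀ t, 0 < c t) ∧
      ∀ t, cross (z 0) (z t) = c t * Real.sin (∑ s ∈ range t, arg (z (s + 1) / z s)) := by
  choose ρ hρ hzρ using exists_pos_mul_exp_sum_arg z hz
  refine ⟨fun t => normSq (z 0) * ρ t, fun t => mul_pos (normSq_pos.2 (hz 0)) (hρ t), ?_⟩
  intro t
  rw [hzρ t, cross_mul_self, mul_im, exp_ofReal_mul_I_re, exp_ofReal_mul_I_im]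
  simp only [ofReal_re, ofReal_im]
  ring

lemma sum_range_mul_sin_pos {α c : ℕ → ℝ} {k n : ℕ} (hα : StrictMono α) (hα0 : α 0 = 0)
    (hα1 : α 1 < π) (hαk : ∀ t < k, α t < 2 * π) (hc : ∀ t, 0 < c t)
    (hsum : ∑ t ∈ range k, c t * Real.sin (α t) = 0) (hn : 2 ≤ n) (hnk : n < k) :
    0 < ∑ t ∈ range n, c t * Real.sin (α t) := by
  have hαpos : ∀ t, 1 ≤ t → 0 < α t := fun t ht => hα0 ▸ hα (show 0 < t by omega)
  by_cases hhalf : α (n - 1) ≤ π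
  · refine sum_pos' (fun t ht => ?_) ⟨1, mem_range.2 (by omega), ?_⟩
    · rcases Nat.eq_zero_or_pos t with rfl | ht1
      · simp [hα0]
      · exact mul_nonneg (hc t).le (Real.sin_nonneg_of_nonneg_of_le_pi (hαpos t ht1).le
          ((hα.monotone (by simp at ht; omega)).trans hhalf))
    · exact mul_pos (hc 1) (Real.sin_pos_of_pos_of_lt_pi (hαpos 1 le_rfl) hα1)
  · have htail : ∑ t ∈ Ico n k, c t * Real.sin (α t) < 0 := by
      refine sum_neg (fun t ht => mul_neg_of_pos_of_neg (hc t) ?_) ⟨n, mem_Ico.2 ⟨le_rfl, hnk⟩⟩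
      rw [mem_Ico] at ht
      have hπ : π < α t := (not_le.1 hhalf).trans_le (hα.monotone (by omega))
      rw [← Real.sin_sub_two_pi]
      exact Real.sin_neg_of_neg_of_neg_pi_lt (by linarith [hαk t ht.2]) (by linarith)
    rw [← sum_range_add_sum_Ico _ hnk.le] at hsum
    linarith

lemma ZMod.sum_range_add_natCast {k : ℕ} [NeZero k] {M : Type*} [AddCommMonoid M]
    (a : ZMod k) (f : ZMod k → M) : ∑ t ∈ range k, f (a + t) = ∑ x, f x := by
  rw [← Equiv.sum_comp (Equiv.addLeft a)]
  refine sum_nbij' (↑) ZMod.val (by simp) (by simp [ZMod.val_lt]) (fun t ht => ?_) (by simp)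
    (by simp)
  simp [ZMod.val_cast_of_lt (mem_range.1 ht)]

section Polygon

variable {k : ℕ}

def VerticesLeftOfEdges (v : ZMod k → ℂ) : Prop :=
  ∀ i j : ZMod k, j ≠ i → j ≠ i + 1 → 0 < cross (v (i + 1) - v i) (v j - v i)

noncomputable def turningAngle (v : ZMod k → ℂ) (i : ZMod k) : ℝ :=
  arg ((v (i + 1) - v i) / (v i - v (i - 1)))

lemma sub_eq_sum_range_edge (v : ZMod k → ℂ) (i : ZMod k) (n : ℕ) :
    v (i + n) - v i = ∑ t ∈ range n, (v (i + t + 1) - v (i + t)) := by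
  have := sum_range_sub (fun t : ℕ => v (i + t)) n
  simp only [Nat.cast_succ, Nat.cast_zero, add_zero, ← add_assoc] at this
  exact this.symm

variable {v : ZMod k → ℂ}

lemma VerticesLeftOfEdges.injective (hleft : VerticesLeftOfEdges v)
    (hne : ∀ i : ZMod k, v (i + 1) ≠ v i) :
    Function.Injective v := by
  intro a b hab
  by_contra hba
  by_cases hb : b = a + 1
  · exact hne a (hb ▸ hab.symm)
  · simpa [hab, cross_zero_right] using hleft a b (Ne.symm hba) hb

lemma VerticesLeftOfEdges.segment_inter_subset (hleft : VerticesLeftOfEdges v)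
    (hk : 3 ≤ k) {i j : ZMod k} (hij : i ≠ j) :
    segment ℝ (v i) (v (i + 1)) ∩ segment ℝ (v j) (v (j + 1)) ⊆
      ({v i, v (i + 1)} : Set ℂ) ∩ ({v j, v (j + 1)} : Set ℂ) := by
  rintro x ⟨hxi, hxj⟩
  have hx0 := cross_sub_eq_zero_of_mem_segment hxi
  have hzero : ∀ m : ℕ, 0 < m → m < k → (m : ZMod k) ≠ 0 := fun m hm hmk => by
    rw [Ne, ZMod.natCast_eq_zero_iff]
    exact Nat.not_dvd_of_pos_of_lt hm hmk
  by_cases hnext : j = i + 1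
  · subst hnext
    have hleft' := hleft i (i + 1 + 1)
      (by simpa [add_assoc, ← one_add_one_eq_two] using hzero 2 two_pos hk)
      (by simpa using hzero 1 one_pos (by omega))
    have : x = v (i + 1) :=
      eq_right_of_mem_segment_of_cross_sub_eq_zero (by rwa [segment_symm] at hxj) hleft'
        (by simp [cross_self_eq_zero]) hx0
    simp [this]
  · have hpos := hleft i j hij.symm hnext
    by_cases hprev : j + 1 = i
    · have : x = v (j + 1) := eq_right_of_mem_segment_of_cross_sub_eq_zero hxj hpos
        (by simp [hprev, cross_zero_right]) hx0
      simp [this, hprev]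
    · have hpos' := hleft i (j + 1) hprev (by simpa using hij.symm)
      have : x = v (j + 1) := eq_right_of_mem_segment_of_cross_sub_eq_zero hxj hpos hpos'.le hx0
      exact absurd hx0 (this ▸ hpos'.ne')

theorem verticesLeftOfEdges_of_turningAngle [NeZero k] (hne : ∀ i : ZMod k, v (i + 1) ≠ v i)
    (hpos : ∀ i, 0 < turningAngle v i) (hlt : ∀ i, turningAngle v i < π)
    (hsum : ∑ i, turningAngle v i = 2 * π) : VerticesLeftOfEdges v := by
  intro i j hji hji1
  set z : ℕ → ℂ := fun m => v (i + m + 1) - v (i + m)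
  set α : ℕ → ℝ := fun m => ∑ t ∈ range m, arg (z (t + 1) / z t)
  have hz0 : z 0 = v (i + 1) - v i := by simp [z]
  have hturn : ∀ t : ℕ, arg (z (t + 1) / z t) = turningAngle v (i + 1 + t) := by
    intro t
    simp only [z, turningAngle]
    push_cast
    ring_nf
  obtain ⟨c, hc, hcross⟩ := exists_cross_eq_mul_sin_sum_arg z fun m => sub_ne_zero.2 (hne _)
  have hα : StrictMono α := strictMono_nat_of_lt_succ fun m => by
    simpa [α, sum_range_succ, hturn] using hpos _
  have hαk : α k = 2 * π := by
    simp only [α, hturn]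
    rw [ZMod.sum_range_add_natCast, hsum]
  have hpartial : ∀ n : ℕ,
      cross (z 0) (v (i + n) - v i) = ∑ t ∈ range n, c t * Real.sin (α t) := by
    intro n
    rw [sub_eq_sum_range_edge, cross_sum_right]
    exact sum_congr rfl fun t _ => hcross t
  set n := (j - i).val
  have hcast : (n : ZMod k) = j - i := ZMod.natCast_zmod_val _
  have hn2 : 2 ≤ n := by
    by_contra! hn
    rcases (show n = 0 ∨ n = 1 by omega) with h | h <;> rw [h] at hcast
    · exact hji (sub_eq_zero.1 (by simpa using hcast.symm))
    · exact hji1 (by linear_combination (by simpa using hcast.symm : j - i = 1))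
  have hn : v (i + n) = v j := by rw [hcast, add_sub_cancel]
  rw [← hz0, ← hn, hpartial]
  refine sum_range_mul_sin_pos hα (by simp [α]) (by simpa [α, hturn] using hlt _)
    (fun t ht => hαk ▸ hα ht) hc ?_ hn2 (ZMod.val_lt _)
  rw [← hpartial, ZMod.natCast_self, add_zero, sub_self, cross_zero_right]


end Polygon

/-- A closed polygonal curve whose turning angle at every vertex is strictly positive
(a left turn, strictly between 0° and 180°) and whose total turning is exactly 360°
is the boundary of a strictly convex polygon: it is simple (edges meet only at shared
endpoints) and every vertex lies strictly to the left of every directed edge. -/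
theorem stmt_18 {k : ℕ} [NeZero k] (hk : 3 ≤ k) (v : ZMod k → ℂ)
    (hne : ∀ i : ZMod k, v (i + 1) ≠ v i)
    (hpos : ∀ i : ZMod k, 0 < Complex.arg ((v (i + 1) - v i) / (v i - v (i - 1))))
    (hlt : ∀ i : ZMod k, Complex.arg ((v (i + 1) - v i) / (v i - v (i - 1))) ≠ Real.pi)
    (hsum : ∑ i : ZMod k, Complex.arg ((v (i + 1) - v i) / (v i - v (i - 1))) =
      2 * Real.pi) :
    Function.Injective v ∧
    (∀ i j : ZMod k, j ≠ i → j ≠ i + 1 → 0 < cross (v (i + 1) - v i) (v j - v i)) ∧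
    (∀ i j : ZMod k, i ≠ j →
      segment ℝ (v i) (v (i + 1)) ∩ segment ℝ (v j) (v (j + 1)) ⊆
        ({v i, v (i + 1)} : Set ℂ) ∩ ({v j, v (j + 1)} : Set ℂ)) := by
  have hleft : VerticesLeftOfEdges v :=
    verticesLeftOfEdges_of_turningAngle hne hpos (fun i => (arg_le_pi _).lt_of_ne (hlt i)) hsum
  exact ⟨hleft.injective hne, hleft, fun _ _ => hleft.segment_inter_subset hk⟩
end

section
/- If a connected graph G is the state transition graph of a medium, then the map sending each state to the set of tokens used in some consistent message from a fixed base state gives an isometric embedding of G into a hypercube; that is, every medium's state transition graph is a partial cube. -/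
/-- Applying a message (list of tokens) to a state. -/
def applyMsg {State Token : Type*} (act : Token → State → State) : State → List Token → State
  | S, [] => S
  | S, t :: w => applyMsg act (act t S) w

/-- A message is stepwise effective for a state if each successive token changes the
current state. -/
def StepwiseEffective {State Token : Type*} (act : Token → State → State) :
    State → List Token → Prop
  | _, [] => True
  | S, t :: w => act t S ≠ S ∧ StepwiseEffective act (act t S) w

/-- A message is consistent if it does not contain both a token and its reverse. -/
def Consistent {Token : Type*} (rev : Token → Token) (w : List Token) : Prop :=
  ∀ t ∈ w, rev t ∉ w

/-- A medium: a finite set of states acted on by tokens, satisfying the four medium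
axioms (unique reverse tokens; consistent stepwise-effective connectivity; the
return-iff-balanced axiom; concatenation consistency). -/
structure Medium (State Token : Type*) [Finite State] [DecidableEq Token] where
  act : Token → State → State
  rev : Token → Token
  rev_spec : ∀ t (S Q : State), S ≠ Q → (act t S = Q ↔ act (rev t) Q = S)
  rev_unique : ∀ t t', (∀ S Q : State, S ≠ Q → (act t S = Q ↔ act t' Q = S)) → t' = rev t
  conn : ∀ S Q : State, S ≠ Q →
    ∃ w, applyMsg act S w = Q ∧ StepwiseEffective act S w ∧ Consistent rev w
  balance : ∀ (S : State) (w : List Token), StepwiseEffective act S w →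
    (applyMsg act S w = S ↔ ∀ t, w.count t = w.count (rev t))
  concat : ∀ (S Q : State) (w z : List Token), applyMsg act S w = applyMsg act Q z →
    StepwiseEffective act S w → StepwiseEffective act Q z →
    Consistent rev w → Consistent rev z → Consistent rev (w ++ z)

/-!
For states `X`, `Y` let `netCount X Y t` be the number of occurrences of `t` minus those of its
reverse in a stepwise effective message from `X` to `Y`. The balance axiom (applied to one
message followed by the reverse of another) makes this independent of the message, so it is
additive along concatenations and antisymmetric under reversal. The concatenation axiom forbids
a concise message to use a token twice, so `netCount` takes values in `{-1, 0, 1}` and the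
tokens with `netCount X Y t = 1` are exactly those of any concise message from `X` to `Y`; in
particular `f S t` records `netCount S0 S t = 1`. By additivity, `f u` and `f v` then differ
in exactly as many coordinates as a concise message from `u` to `v` has tokens, which bounds the
graph distance from above, while a single step changes at most one coordinate.
-/

open Finset

theorem hammingDist_decide_eq_one_add {ι : Type*} [Fintype ι] [DecidableEq ι] {σ : ι → ι}
    (hσ : Function.Involutive σ) {a c : ι → ℤ} (ha : ∀ i, a (σ i) = -a i)
    (hc : ∀ i, c (σ i) = -c i) (ha₁ : ∀ i, |a i| ≤ 1) (hc₁ : ∀ i, |c i| ≤ 1)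
    (hac₁ : ∀ i, |a i + c i| ≤ 1) :
    hammingDist (fun i => decide (a i = 1)) (fun i => decide (a i + c i = 1)) =
      #{i | c i = 1} := by
  have bounds (i : ι) :=
    And.intro (abs_le.mp (ha₁ i)) (And.intro (abs_le.mp (hc₁ i)) (abs_le.mp (hac₁ i)))
  have flip : #{i | c i = -1 ∧ a i = 1} = #{i | c i = 1 ∧ a i = -1} :=
    card_equiv (hσ.toPerm σ) fun i => by simp [ha, hc, neg_eq_iff_eq_neg]
  calc hammingDist (fun i => decide (a i = 1)) (fun i => decide (a i + c i = 1))
      = #(({i | c i = 1 ∧ a i = 0} : Finset ι) ∪ ({i | c i = -1 ∧ a i = 1} : Finset ι)) := by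
        unfold hammingDist
        congr 1; ext i; have := bounds i
        simp only [mem_filter, mem_union, mem_univ, true_and, ne_eq, decide_eq_decide]; omega
    _ = #{i | c i = 1 ∧ a i = 0} + #{i | c i = 1 ∧ a i = -1} := by
        rw [card_union_of_disjoint (disjoint_filter.mpr fun i _ h h' => by omega), flip]
    _ = #{i | c i = 1} := by
        rw [← card_union_of_disjoint (disjoint_filter.mpr fun i _ h h' => by omega), ← filter_or]
        congr 1; ext i; have := bounds i; simp only [mem_filter, mem_univ, true_and]; omega

theorem SimpleGraph.Walk.hammingDist_le_length {V ι β : Type*} [Fintype ι] [DecidableEq β]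
    {G : SimpleGraph V} {F : V → ι → β} (hF : ∀ x y, G.Adj x y → hammingDist (F x) (F y) ≤ 1)
    {u v : V} (p : G.Walk u v) : hammingDist (F u) (F v) ≤ p.length := by
  induction p with
  | nil => simp
  | @cons x y z h _ ih =>
    have := hF x y h
    have := hammingDist_triangle (F x) (F y) (F z)
    rw [length_cons]; omega

section Messages

variable {State Token : Type*} (act : Token → State → State)

@[simp]
theorem applyMsg_append (S : State) (w z : List Token) :
    applyMsg act S (w ++ z) = applyMsg act (applyMsg act S w) z := by
  induction w generalizing S with
  | nil => rfl
  | cons t w ih => exact ih _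

@[simp]
theorem applyMsg_cons (S : State) (t : Token) (w : List Token) :
    applyMsg act S (t :: w) = applyMsg act (act t S) w :=
  rfl

theorem stepwiseEffective_append {S : State} {w z : List Token} :
    StepwiseEffective act S (w ++ z) ↔
      StepwiseEffective act S w ∧ StepwiseEffective act (applyMsg act S w) z := by
  induction w generalizing S with
  | nil => simp [StepwiseEffective, applyMsg]
  | cons t w ih => simp [StepwiseEffective, applyMsg, ih, and_assoc]

variable {act}

theorem Consistent.subset {rev : Token → Token} {w z : List Token} (hw : Consistent rev w)
    (h : z ⊆ w) : Consistent rev z :=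
  fun t ht hrt => hw t (h ht) (h hrt)

end Messages

namespace Medium

variable {State Token : Type*} [Finite State] [DecidableEq Token] (M : Medium State Token)

theorem rev_involutive : Function.Involutive M.rev := fun t =>
  (M.rev_unique (M.rev t) t fun S Q hSQ => (M.rev_spec t Q S hSQ.symm).symm).symm

@[simp]
theorem rev_rev (t : Token) : M.rev (M.rev t) = t :=
  M.rev_involutive t

theorem act_rev_act {t : Token} {S : State} (h : M.act t S ≠ S) :
    M.act (M.rev t) (M.act t S) = S :=
  (M.rev_spec t S _ (Ne.symm h)).mp rfl

def revMsg (w : List Token) : List Token :=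
  w.reverse.map M.rev

@[simp]
theorem revMsg_cons (t : Token) (w : List Token) :
    M.revMsg (t :: w) = M.revMsg w ++ [M.rev t] := by
  simp [revMsg]

@[simp]
theorem mem_revMsg {t : Token} {w : List Token} : t ∈ M.revMsg w ↔ M.rev t ∈ w := by
  simp [revMsg, M.rev_involutive.eq_iff]

theorem count_revMsg (t : Token) (w : List Token) :
    (M.revMsg w).count t = w.count (M.rev t) := by
  rw [← M.rev_rev t, revMsg, List.count_map_of_injective _ _ M.rev_involutive.injective,
    List.count_reverse, rev_rev]

theorem applyMsg_revMsg {S : State} {w : List Token} (h : StepwiseEffective M.act S w) :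
    applyMsg M.act (applyMsg M.act S w) (M.revMsg w) = S := by
  induction w generalizing S with
  | nil => rfl
  | cons t w ih =>
    rw [revMsg_cons, applyMsg_append]
    exact (congrArg (M.act (M.rev t)) (ih h.2)).trans (M.act_rev_act h.1)

theorem stepwiseEffective_revMsg {S : State} {w : List Token} (h : StepwiseEffective M.act S w) :
    StepwiseEffective M.act (applyMsg M.act S w) (M.revMsg w) := by
  induction w generalizing S with
  | nil => trivial
  | cons t w ih =>
    rw [revMsg_cons, stepwiseEffective_append, applyMsg_cons, M.applyMsg_revMsg h.2]
    exact ⟨ih h.2, by rw [M.act_rev_act h.1]; exact h.1.symm, trivial⟩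

theorem consistent_revMsg {w : List Token} (h : Consistent M.rev w) :
    Consistent M.rev (M.revMsg w) := by
  intro t ht hrt
  rw [mem_revMsg] at ht hrt
  exact h _ ht (by rwa [rev_rev] at hrt ⊢)

/-- The balance axiom, applied to `w` followed by the reverse of `z`. -/
theorem count_add_count_rev_eq {S : State} {w z : List Token} (hw : StepwiseEffective M.act S w)
    (hz : StepwiseEffective M.act S z) (h : applyMsg M.act S w = applyMsg M.act S z)
    (t : Token) : w.count t + z.count (M.rev t) = w.count (M.rev t) + z.count t := by
  have hloop : applyMsg M.act S (w ++ M.revMsg z) = S := by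
    rw [applyMsg_append, h, M.applyMsg_revMsg hz]
  have hse : StepwiseEffective M.act S (w ++ M.revMsg z) :=
    (stepwiseEffective_append _).mpr ⟨hw, h ▸ M.stepwiseEffective_revMsg hz⟩
  have := (M.balance S _ hse).mp hloop t
  rwa [List.count_append, List.count_append, count_revMsg, count_revMsg, rev_rev] at this

def graph : SimpleGraph State :=
  SimpleGraph.fromRel fun S Q => ∃ t, M.act t S = Q

theorem exists_walk_of_stepwiseEffective {S : State} {w : List Token}
    (h : StepwiseEffective M.act S w) :
    ∃ p : M.graph.Walk S (applyMsg M.act S w), p.length = w.length := by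
  induction w generalizing S with
  | nil => exact ⟨.nil, rfl⟩
  | cons t w ih =>
    obtain ⟨p, hp⟩ := ih h.2
    have hadj : M.graph.Adj S (M.act t S) :=
      SimpleGraph.fromRel_adj _ _ _ |>.mpr ⟨h.1.symm, .inl ⟨t, rfl⟩⟩
    exact ⟨.cons hadj p, congrArg (· + 1) hp⟩

/-- The paper's concise messages are also required to be repetition-free; here that is a
consequence (`IsConcise.nodup`). -/
def IsConcise (S : State) (w : List Token) : Prop :=
  StepwiseEffective M.act S w ∧ Consistent M.rev w

variable {M}

theorem IsConcise.of_append_left {S : State} {w z : List Token} (h : M.IsConcise S (w ++ z)) :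
    M.IsConcise S w :=
  ⟨((stepwiseEffective_append _).mp h.1).1, h.2.subset (List.subset_append_left _ _)⟩

theorem IsConcise.of_append_right {S : State} {w z : List Token} (h : M.IsConcise S (w ++ z)) :
    M.IsConcise (applyMsg M.act S w) z :=
  ⟨((stepwiseEffective_append _).mp h.1).2, h.2.subset (List.subset_append_right _ _)⟩

theorem IsConcise.revMsg {S : State} {w : List Token} (h : M.IsConcise S w) :
    M.IsConcise (applyMsg M.act S w) (M.revMsg w) :=
  ⟨M.stepwiseEffective_revMsg h.1, M.consistent_revMsg h.2⟩

theorem IsConcise.disjoint {X : State} {m n : List Token} (hm : M.IsConcise X m)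
    (hn : M.IsConcise (applyMsg M.act X m) n) : m.Disjoint n := by
  intro t htm htn
  obtain ⟨m₁, m₂, rfl⟩ := List.append_of_mem htm
  obtain ⟨n₁, n₂, rfl⟩ := List.append_of_mem htn
  -- `t :: m₂` and the reverse of `n₁ ++ [t]` both lead to the same state, so by the
  -- concatenation axiom their concatenation, which holds `t` and `M.rev t`, is consistent.
  have hin : M.IsConcise (applyMsg M.act X m₁) (t :: m₂) := hm.of_append_right
  have hout : M.IsConcise (applyMsg M.act X (m₁ ++ t :: m₂)) (n₁ ++ [t]) :=
    IsConcise.of_append_left (z := n₂) (by simpa using hn)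
  have hcat := M.concat _ _ _ _ (by rw [M.applyMsg_revMsg hout.1, applyMsg_append]) hin.1
    hout.revMsg.1 hin.2 hout.revMsg.2
  exact hcat t (by simp) (by simp)

theorem IsConcise.nodup {S : State} {w : List Token} (h : M.IsConcise S w) : w.Nodup := by
  induction w generalizing S with
  | nil => exact List.nodup_nil
  | cons t w ih =>
    have h' : M.IsConcise S ([t] ++ w) := h
    exact List.nodup_cons.mpr
      ⟨fun ht => h'.of_append_left.disjoint h'.of_append_right (by simp) ht, ih h'.of_append_right⟩

variable (M)

noncomputable def conciseMsg (X Y : State) : List Token :=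
  open Classical in if h : X = Y then [] else (M.conn X Y h).choose

theorem applyMsg_conciseMsg (X Y : State) : applyMsg M.act X (M.conciseMsg X Y) = Y := by
  unfold conciseMsg
  split_ifs with h
  · exact h
  · exact (M.conn X Y h).choose_spec.1

theorem isConcise_conciseMsg (X Y : State) : M.IsConcise X (M.conciseMsg X Y) := by
  unfold conciseMsg
  split_ifs with h
  · exact ⟨trivial, fun _ ht => absurd ht List.not_mem_nil⟩
  · exact (M.conn X Y h).choose_spec.2

noncomputable def netCount (X Y : State) (t : Token) : ℤ :=
  (M.conciseMsg X Y).count t - (M.conciseMsg X Y).count (M.rev t)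

theorem netCount_applyMsg {S : State} {w : List Token} (h : StepwiseEffective M.act S w)
    (t : Token) : M.netCount S (applyMsg M.act S w) t = w.count t - w.count (M.rev t) := by
  have := M.count_add_count_rev_eq (M.isConcise_conciseMsg S _).1 h
    (M.applyMsg_conciseMsg S _) t
  unfold netCount
  omega

theorem netCount_rev (X Y : State) (t : Token) : M.netCount X Y (M.rev t) = -M.netCount X Y t := by
  simp [netCount]

theorem netCount_trans (X Y Z : State) (t : Token) :
    M.netCount X Z t = M.netCount X Y t + M.netCount Y Z t := by
  have hXY := M.isConcise_conciseMsg X Y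
  have hYZ := M.isConcise_conciseMsg Y Z
  have hse : StepwiseEffective M.act X (M.conciseMsg X Y ++ M.conciseMsg Y Z) :=
    (stepwiseEffective_append _).mpr ⟨hXY.1, by rw [M.applyMsg_conciseMsg]; exact hYZ.1⟩
  have hXZ := M.netCount_applyMsg hse t
  rw [applyMsg_append, M.applyMsg_conciseMsg, M.applyMsg_conciseMsg] at hXZ
  rw [hXZ, List.count_append, List.count_append]
  unfold netCount
  push_cast
  ring

theorem IsConcise.netCount_eq_one_iff {S : State} {w : List Token} (h : M.IsConcise S w)
    {t : Token} : M.netCount S (applyMsg M.act S w) t = 1 ↔ t ∈ w := by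
  rw [M.netCount_applyMsg h.1]
  have := List.nodup_iff_count_le_one.mp h.nodup t
  by_cases ht : t ∈ w
  · have := List.count_eq_zero_of_not_mem (h.2 t ht)
    have := List.count_pos_iff.mpr ht
    simp only [ht, iff_true]
    omega
  · simp only [ht, iff_false, List.count_eq_zero_of_not_mem ht]
    omega

theorem mem_conciseMsg_iff {X Y : State} {t : Token} :
    t ∈ M.conciseMsg X Y ↔ M.netCount X Y t = 1 := by
  conv_rhs => rw [← M.applyMsg_conciseMsg X Y]
  exact ((M.isConcise_conciseMsg X Y).netCount_eq_one_iff).symm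

theorem abs_netCount_le_one (X Y : State) (t : Token) : |M.netCount X Y t| ≤ 1 := by
  have h := M.isConcise_conciseMsg X Y
  have := List.nodup_iff_count_le_one.mp h.nodup t
  have := List.nodup_iff_count_le_one.mp h.nodup (M.rev t)
  have : ¬(t ∈ M.conciseMsg X Y ∧ M.rev t ∈ M.conciseMsg X Y) := fun h' => h.2 t h'.1 h'.2
  rw [← List.count_pos_iff, ← List.count_pos_iff] at this
  unfold netCount
  rw [abs_le]
  omega

variable [Fintype Token]

theorem card_netCount_eq_one (X Y : State) :
    #{t | M.netCount X Y t = 1} = (M.conciseMsg X Y).length := by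
  rw [← List.toFinset_card_of_nodup (M.isConcise_conciseMsg X Y).nodup]
  congr 1
  ext t
  simp [mem_conciseMsg_iff]

theorem card_netCount_act_le_one {S : State} {t : Token} (h : M.act t S ≠ S) :
    #{s | M.netCount S (M.act t S) s = 1} ≤ 1 := by
  have hstep : ∀ s, M.netCount S (M.act t S) s = [t].count s - [t].count (M.rev s) :=
    M.netCount_applyMsg (w := [t]) ⟨h, trivial⟩
  have eq_of_mem (s : Token) (hs : s ∈ ({s | M.netCount S (M.act t S) s = 1} : Finset Token)) :
      s = t := by
    rw [mem_filter, hstep] at hs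
    simpa using List.count_pos_iff.mp (by omega : 0 < [t].count s)
  exact card_le_one.mpr fun a ha b hb => (eq_of_mem a ha).trans (eq_of_mem b hb).symm

noncomputable def content (S₀ S : State) (t : Token) : Bool :=
  decide (M.netCount S₀ S t = 1)

theorem hammingDist_content (S₀ X Y : State) :
    hammingDist (M.content S₀ X) (M.content S₀ Y) = #{t | M.netCount X Y t = 1} := by
  unfold content
  simp only [M.netCount_trans S₀ X Y]
  exact hammingDist_decide_eq_one_add M.rev_involutive (M.netCount_rev S₀ X)
    (M.netCount_rev X Y) (M.abs_netCount_le_one S₀ X) (M.abs_netCount_le_one X Y)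
    fun t => M.netCount_trans S₀ X Y t ▸ M.abs_netCount_le_one S₀ Y t

theorem exists_walk_length_eq_card_netCount (X Y : State) :
    ∃ p : M.graph.Walk X Y, p.length = #{t | M.netCount X Y t = 1} := by
  obtain ⟨p, hp⟩ := M.exists_walk_of_stepwiseEffective (M.isConcise_conciseMsg X Y).1
  exact ⟨p.copy rfl (M.applyMsg_conciseMsg X Y), by rw [SimpleGraph.Walk.length_copy, hp,
    card_netCount_eq_one]⟩

theorem hammingDist_content_le_one_of_adj (S₀ : State) {X Y : State} (h : M.graph.Adj X Y) :
    hammingDist (M.content S₀ X) (M.content S₀ Y) ≤ 1 := by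
  obtain ⟨hne, ⟨t, rfl⟩ | ⟨t, rfl⟩⟩ := (SimpleGraph.fromRel_adj _ _ _).mp h
  · rw [hammingDist_content]
    exact M.card_netCount_act_le_one hne.symm
  · rw [hammingDist_comm, hammingDist_content]
    exact M.card_netCount_act_le_one hne

end Medium

theorem stmt_19_general {State Token : Type*} [Finite State] [DecidableEq Token]
    [Fintype Token] (M : Medium State Token)
    (S0 : State) (f : State → Token → Bool)
    (hf : ∀ (S : State) (t : Token), f S t = true ↔
      ∃ w, applyMsg M.act S0 w = S ∧ StepwiseEffective M.act S0 w ∧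
        Consistent M.rev w ∧ t ∈ w) :
    ∀ u v : State,
      (SimpleGraph.fromRel fun S Q : State => ∃ t : Token, M.act t S = Q).dist u v =
        hammingDist (f u) (f v) := by
  have hf_eq : f = M.content S0 := by
    funext S t
    rw [Bool.eq_iff_iff, hf, Medium.content, decide_eq_true_iff]
    constructor
    · rintro ⟨w, rfl, hw, hc, ht⟩
      exact (Medium.IsConcise.netCount_eq_one_iff (M := M) ⟨hw, hc⟩).mpr ht
    · exact fun ht => ⟨_, M.applyMsg_conciseMsg S0 S, (M.isConcise_conciseMsg S0 S).1,
        (M.isConcise_conciseMsg S0 S).2, M.mem_conciseMsg_iff.mpr ht⟩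
  subst hf_eq
  intro u v
  change M.graph.dist u v = _
  obtain ⟨p, hp⟩ := M.exists_walk_length_eq_card_netCount u v
  obtain ⟨q, hq⟩ := p.reachable.exists_walk_length_eq_dist
  rw [M.hammingDist_content]
  refine le_antisymm (hp ▸ SimpleGraph.dist_le p) ?_
  rw [← M.hammingDist_content S0, ← hq]
  exact q.hammingDist_le_length fun x y hxy => M.hammingDist_content_le_one_of_adj S0 hxy

/-- The state transition graph of a medium is a partial cube: fixing a base state `S0`,
the map assigning to each state `S` the 0/1 vector recording, for each token `t`,
whether some consistent stepwise-effective message from `S0` to `S` uses `t`, is an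
isometric embedding of the state transition graph into a hypercube. -/
theorem stmt_19 {State Token : Type*} [Finite State] [DecidableEq Token]
    [Fintype Token] (M : Medium State Token)
    (hconn : (SimpleGraph.fromRel fun S Q : State => ∃ t : Token, M.act t S = Q).Connected)
    (S0 : State) (f : State → Token → Bool)
    (hf : ∀ (S : State) (t : Token), f S t = true ↔
      ∃ w, applyMsg M.act S0 w = S ∧ StepwiseEffective M.act S0 w ∧
        Consistent M.rev w ∧ t ∈ w) :
    ∀ u v : State,
      (SimpleGraph.fromRel fun S Q : State => ∃ t : Token, M.act t S = Q).dist u v =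
        hammingDist (f u) (f v) :=
  stmt_19_general M S0 f hf
end
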